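/- arXiv:2409.13124 — 14 statements merged into one kernel-verified Lean document; each statement's English description precedes it below -/
import Mathlib

section
/- In any algebra of the variety V(3_dblst, 4_dmba) (an Almost Gautama algebra satisfying the identity (J): x' ∨ y* ∨ z = (x' ∨ y)* ∨ (x' ∨ z)), the identity x' ∨ x'* = 1 holds. -/
/-- A Stone algebra: a bounded distributive lattice with a pseudocomplement
operation `s` satisfying the Stone identity. -/
class StoneAlgebra (α : Type*) extends DistribLattice α, BoundedOrder α where
  s : α → α
  s_bot : s ⊥ = ⊤
  s_top : s ⊤ = ⊥
  s_sup : ∀ x y : α, s (x ⊔ y) = s x ⊓ s y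
  s_inf : ∀ x y : α, s (s (x ⊓ y)) = s (s x) ⊓ s (s y)
  le_ss : ∀ x : α, x ≤ s (s x)
  inf_s : ∀ x : α, x ⊓ s x = ⊥
  stone : ∀ x : α, s x ⊔ s (s x) = ⊤

/-- An Almost Gautama algebra: a Stone algebra together with a dually
quasi-De Morgan operation `p`, satisfying regularity (R1), weak
star-regularity, and (L1). -/
class AGAlgebra (α : Type*) extends StoneAlgebra α where
  p : α → α
  p_bot : p ⊥ = ⊤
  p_top : p ⊤ = ⊥
  p_inf : ∀ x y : α, p (x ⊓ y) = p x ⊔ p y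
  pp_sup : ∀ x y : α, p (p (x ⊔ y)) = p (p x) ⊔ p (p y)
  pp_le : ∀ x : α, p (p x) ≤ x
  R1 : ∀ x y : α, x ⊓ p (s (p x)) ≤ y ⊔ s y
  weak_star : ∀ x : α, p (p (s x)) = s x
  L1 : ∀ x : α, s (p (x ⊓ s (p x))) = x ⊓ s (p x)

open StoneAlgebra AGAlgebra

/-- In any algebra of `V(3_dblst, 4_dmba)`, the identity `x' ⊔ x'* = ⊤` holds. -/
theorem stmt_1 {α : Type*} [AGAlgebra α]
    (hJ : ∀ x y z : α, p x ⊔ s y ⊔ z = s (p x ⊔ y) ⊔ (p x ⊔ z)) :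
    ∀ x : α, p x ⊔ s (p x) = ⊤ := by
  intro x
  have h := hJ x ⊥ (p x)
  simp [s_bot, sup_comm] at h
  exact h.symm
end

section
/- In any algebra of the variety V(3_dblst, 4_dmba), the identity x'** = x' holds. -/
open StoneAlgebra AGAlgebra

/-- In any algebra of `V(3_dblst, 4_dmba)`, the identity `x'** = x'` holds. -/
theorem stmt_2 {α : Type*} [AGAlgebra α]
    (hJ : ∀ x y z : α, p x ⊔ s y ⊔ z = s (p x ⊔ y) ⊔ (p x ⊔ z)) :
    ∀ x : α, s (s (p x)) = p x := by
  intro x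
  have h1 : s (p x) ⊔ p x = ⊤ := by
    have := hJ x ⊥ ⊥
    simp only [s_bot, sup_bot_eq, sup_top_eq] at this
    exact this.symm
  calc s (s (p x)) = s (s (p x)) ⊓ (s (p x) ⊔ p x) := by rw [h1, inf_top_eq]
    _ = (s (s (p x)) ⊓ s (p x)) ⊔ (s (s (p x)) ⊓ p x) := inf_sup_left _ _ _
    _ = ⊥ ⊔ p x := by
        rw [inf_comm (s (s (p x))) (s (p x)), inf_s,
          inf_eq_right.mpr (le_ss (p x))]
    _ = p x := bot_sup_eq _
end

section
/- Every Almost Gautama algebra satisfies the identity x'' ∧ x'* = x ∧ x'*. -/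
open StoneAlgebra AGAlgebra

/-- Every Almost Gautama algebra satisfies `x'' ⊓ x'* = x ⊓ x'*`. -/
theorem stmt_3 {α : Type*} [AGAlgebra α] :
    ∀ x : α, p (p x) ⊓ s (p x) = x ⊓ s (p x) := by

  intro x
  -- pp is monotone
  have ppmono : ∀ a b : α, a ≤ b → p (p a) ≤ p (p b) := by
    intro a b hab
    have h : a ⊔ b = b := sup_eq_right.mpr hab
    have := pp_sup a b
    rw [h] at this
    rw [this]
    exact le_sup_left
  set t := x ⊓ s (p x) with ht
  -- t = pp t, using L1 and weak_star
  have h1 : s (p t) = t := L1 x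
  have h2 : p (p t) = t := by
    conv_lhs => rw [← h1]
    rw [weak_star, h1]
  apply le_antisymm
  · exact inf_le_inf_right _ (pp_le x)
  · have h3 : t ≤ p (p x) := by
      calc t = p (p t) := h2.symm
        _ ≤ p (p x) := ppmono _ _ inf_le_left
    exact le_inf h3 inf_le_right
end

section
/- In any algebra A of the variety V(3_klst, 4_dmba), the identity x*'* ∧ x* = x* ∧ x' holds. -/
open StoneAlgebra AGAlgebra

section Aux
variable {α : Type*} [AGAlgebra α]

/-- `p` is antitone. -/
lemma ag_p_anti {x y : α} (h : x ≤ y) : p y ≤ p x := by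
  have h1 : p (x ⊓ y) = p x ⊔ p y := p_inf x y
  rw [inf_eq_left.mpr h] at h1
  calc p y ≤ p x ⊔ p y := le_sup_right
    _ = p x := h1.symm

/-- If `y ⊓ z = ⊥` then `y ≤ s z`. -/
lemma ag_le_s_of_inf_bot {y z : α} (h : y ⊓ z = ⊥) : y ≤ s z := by
  have h1 : y ⊓ s (s z) ≤ (⊥ : α) := by
    calc y ⊓ s (s z) ≤ s (s y) ⊓ s (s z) := inf_le_inf_right _ (le_ss y)
      _ = s (s (y ⊓ z)) := (s_inf y z).symm
      _ = ⊥ := by rw [h, s_bot, s_top]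
  calc y = y ⊓ (s z ⊔ s (s z)) := by rw [stone z, inf_top_eq]
    _ = (y ⊓ s z) ⊔ (y ⊓ s (s z)) := inf_sup_left _ _ _
    _ ≤ s z ⊔ ⊥ := sup_le_sup inf_le_right h1
    _ = s z := sup_bot_eq _

end Aux

/-- In any algebra of `V(3_klst, 4_dmba)`, `x*'* ⊓ x* = x* ⊓ x'`. -/
theorem stmt_4 {α : Type*} [AGAlgebra α]
    (hinv : ∀ x : α, p (p x) = x) :
    ∀ x : α, s (p (s x)) ⊓ s x = s x ⊓ p x := by
  intro x
  -- g := p x ⊓ s x satisfies s (p g) = g (from L1 at p x and involution)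
  have hg : s (p (p x ⊓ s x)) = p x ⊓ s x := by
    have := L1 (p x)
    rwa [hinv x] at this
  -- g ⊓ p g = ⊥
  have hgpg : (p x ⊓ s x) ⊓ p (p x ⊓ s x) = ⊥ := by
    calc (p x ⊓ s x) ⊓ p (p x ⊓ s x)
        = p (p x ⊓ s x) ⊓ s (p (p x ⊓ s x)) := by rw [hg, inf_comm]
      _ = ⊥ := inf_s _
  -- D : (s x ⊓ p x) ⊓ p (s x) = ⊥
  have hD : (s x ⊓ p x) ⊓ p (s x) = ⊥ := by
    have h1 : p (s x) ≤ p (p x ⊓ s x) := ag_p_anti inf_le_right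
    have h2 : (s x ⊓ p x) ⊓ p (s x) ≤ (p x ⊓ s x) ⊓ p (p x ⊓ s x) :=
      inf_le_inf (by rw [inf_comm]) h1
    exact le_antisymm (hgpg ▸ h2) bot_le
  -- p (s x) and p (s (s x)) are complementary
  have hc1 : p (s x) ⊓ p (s (s x)) = ⊥ := by
    calc p (s x) ⊓ p (s (s x))
        = p (p (p (s x) ⊓ p (s (s x)))) := (hinv _).symm
      _ = p (p (p (s x)) ⊔ p (p (s (s x)))) := by rw [p_inf]
      _ = p (s x ⊔ s (s x)) := by rw [hinv, hinv]
      _ = ⊥ := by rw [stone x, p_top]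
  have hc2 : p (s x) ⊔ p (s (s x)) = ⊤ := by
    rw [← p_inf, inf_s (s x), p_bot]
  -- s (p (s x)) = p (s (s x))
  have hkey : s (p (s x)) = p (s (s x)) := by
    apply le_antisymm
    · calc s (p (s x))
          = s (p (s x)) ⊓ (p (s x) ⊔ p (s (s x))) := by rw [hc2, inf_top_eq]
        _ = (s (p (s x)) ⊓ p (s x)) ⊔ (s (p (s x)) ⊓ p (s (s x))) :=
            inf_sup_left _ _ _
        _ = ⊥ ⊔ (s (p (s x)) ⊓ p (s (s x))) := by
            rw [inf_comm (s (p (s x))) (p (s x)), inf_s]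
        _ ≤ p (s (s x)) := by simp
    · exact ag_le_s_of_inf_bot (by rw [inf_comm]; exact hc1)
  apply le_antisymm
  · rw [hkey, inf_comm]
    exact inf_le_inf_left _ (ag_p_anti (le_ss x))
  · exact le_inf (ag_le_s_of_inf_bot hD) inf_le_left
end

section
/- Let A be an Almost Gautama algebra satisfying the involution identity x'' = x, and let a, b ∈ A with a* = 0, b' = b, and b*' = b*. Then b* ∧ (b ∧ a)' = 0. -/
open StoneAlgebra AGAlgebra


/-- Uniqueness of complements in a bounded distributive lattice. -/
lemma myComplUnique {α : Type*} [DistribLattice α] [BoundedOrder α]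
    {c d z : α} (h1 : c ⊓ z = ⊥) (h2 : c ⊔ z = ⊤)
    (h3 : d ⊓ z = ⊥) (h4 : d ⊔ z = ⊤) : c = d := by
  have hc : c = c ⊓ d := by
    calc c = c ⊓ (d ⊔ z) := by rw [h4, inf_top_eq]
    _ = (c ⊓ d) ⊔ (c ⊓ z) := by rw [inf_sup_left]
    _ = c ⊓ d := by rw [h1, sup_bot_eq]
  have hd : d = d ⊓ c := by
    calc d = d ⊓ (c ⊔ z) := by rw [h2, inf_top_eq]
    _ = (d ⊓ c) ⊔ (d ⊓ z) := by rw [inf_sup_left]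
    _ = d ⊓ c := by rw [h3, sup_bot_eq]
  rw [hc, inf_comm]
  exact hd.symm

/-- In a Stone algebra, the pseudocomplement of a meet is the join of the
pseudocomplements. -/
lemma s_inf_eq {α : Type*} [StoneAlgebra α] (x y : α) :
    s (x ⊓ y) = s x ⊔ s y := by
  apply myComplUnique (z := s (s x) ⊓ s (s y))
  · rw [← s_inf]; exact inf_s (s (x ⊓ y))
  · rw [← s_inf]; exact stone (x ⊓ y)
  · rw [inf_sup_right]
    have hx : s x ⊓ (s (s x) ⊓ s (s y)) = ⊥ := by
      rw [← inf_assoc, inf_s, bot_inf_eq]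
    have hy : s y ⊓ (s (s x) ⊓ s (s y)) = ⊥ := by
      rw [inf_comm (s (s x)) (s (s y)), ← inf_assoc, inf_s, bot_inf_eq]
    rw [hx, hy, sup_bot_eq]
  · rw [sup_inf_left]
    have hx : s x ⊔ s y ⊔ s (s x) = ⊤ := by
      rw [sup_comm (s x) (s y), sup_assoc, stone, sup_top_eq]
    have hy : s x ⊔ s y ⊔ s (s y) = ⊤ := by
      rw [sup_assoc, stone, sup_top_eq]
    rw [hx, hy, inf_top_eq]

/-- In an Almost Gautama algebra with involution, if `a* = ⊥`, `b' = b` and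
`b*' = b*`, then `b* ⊓ (b ⊓ a)' = ⊥`. -/
theorem stmt_5 {α : Type*} [AGAlgebra α]
    (hinv : ∀ x : α, p (p x) = x)
    (a b : α) (ha : s a = ⊥) (hb : p b = b) (hbs : p (s b) = s b) :
    s b ⊓ p (b ⊓ a) = ⊥ := by
  -- `p` of a join is the meet of `p`'s, thanks to the involution.
  have psup : ∀ u v : α, p (u ⊔ v) = p u ⊓ p v := by
    intro u v
    have h : p (p u ⊓ p v) = u ⊔ v := by rw [p_inf, hinv, hinv]
    calc p (u ⊔ v) = p (p (p u ⊓ p v)) := by rw [h]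
    _ = p u ⊓ p v := hinv _
  -- compute `s (b ⊓ a) = s b`
  have hm : s (b ⊓ a) = s b := by rw [s_inf_eq, ha, sup_bot_eq]
  -- instantiate L1 at `x = b ⊔ p a`
  have hL := L1 (b ⊔ p a)
  have hpx : p (b ⊔ p a) = b ⊓ a := by rw [psup, hb, hinv]
  rw [hpx, hm] at hL
  -- the left side of L1 collapses to ⊥
  have hleft : s (p ((b ⊔ p a) ⊓ s b)) = ⊥ := by
    rw [p_inf, hpx, hbs, s_sup, hm, inf_s]
  rw [hleft] at hL
  -- conclude
  rw [p_inf, hb, inf_comm, ← hL]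
end

section
/- There is no algebra A in the variety V(3_klst, 4_dmba) containing elements a, b with 0 < a < 1, a* = 0, a' = a, 0 < b < 1, b' = b, b*' = b*, and b ∨ b* = 1. Consequently the diagram ⟨2; 3_klst, 4_dmba⟩ is not amalgamable in V(3_klst, 4_dmba), so this variety does not have the Amalgamation Property. -/
open StoneAlgebra AGAlgebra

/-- There is no algebra in `V(3_klst, 4_dmba)` containing elements `a, b` with
`⊥ < a < ⊤`, `a* = ⊥`, `a' = a`, `⊥ < b < ⊤`, `b' = b`, `b*' = b*` and
`b ⊔ b* = ⊤`; hence this variety does not have the Amalgamation Property. -/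
theorem stmt_6 {α : Type*} [AGAlgebra α]
    (hinv : ∀ x : α, p (p x) = x) (a b : α) :
    ¬ (⊥ < a ∧ a < ⊤ ∧ s a = ⊥ ∧ p a = a ∧
       ⊥ < b ∧ b < ⊤ ∧ p b = b ∧ p (s b) = s b ∧ b ⊔ s b = ⊤) := by
  rintro ⟨ha0, ha1, hsa, hpa, hb0, hb1, hpb, hpsb, hbsb⟩
  -- s is antitone
  have anti : ∀ x y : α, x ≤ y → s y ≤ s x := by
    intro x y h
    have h1 : s (x ⊔ y) = s x ⊓ s y := s_sup x y
    rw [sup_eq_right.mpr h] at h1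
    rw [h1]; exact inf_le_left
  have sss : ∀ x : α, s (s (s x)) = s x :=
    fun x => le_antisymm (anti _ _ (le_ss x)) (le_ss (s x))
  -- s s b = b
  have hssb : s (s b) = b := by
    have h1 : s (s b) = s (s b) ⊓ (b ⊔ s b) := by rw [hbsb, inf_top_eq]
    have h2 : s (s b) ⊓ s b = ⊥ := by rw [inf_comm]; exact inf_s (s b)
    rw [inf_sup_left, h2, sup_bot_eq, inf_eq_right.mpr (le_ss b)] at h1
    exact h1
  -- p distributes over sup (using involution)
  have psup : ∀ x y : α, p (x ⊔ y) = p x ⊓ p y := by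
    intro x y
    have h := p_inf (p x) (p y)
    rw [hinv, hinv] at h
    calc p (x ⊔ y) = p (p (p x ⊓ p y)) := by rw [h]
      _ = p x ⊓ p y := hinv _
  -- s (a ⊓ s b) = b
  have h1 : s (a ⊓ s b) = b := by
    have hss : s (s (a ⊓ s b)) = s b := by
      rw [s_inf, hsa, s_bot, sss, top_inf_eq]
    calc s (a ⊓ s b) = s (s (s (a ⊓ s b))) := (sss _).symm
      _ = s (s b) := by rw [hss]
      _ = b := hssb
  -- apply L1 at x = a ⊔ s b
  have hL := L1 (a ⊔ s b)
  have hpx : p (a ⊔ s b) = a ⊓ s b := by rw [psup, hpa, hpsb]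
  rw [hpx, h1] at hL
  have hx : (a ⊔ s b) ⊓ b = a ⊓ b := by
    rw [inf_sup_right, inf_comm (s b) b, inf_s b, sup_bot_eq]
  rw [hx] at hL
  have hbot : s (p (a ⊓ b)) = ⊥ := by
    rw [p_inf, hpa, hpb, s_sup, hsa, bot_inf_eq]
  have hab : a ⊓ b = ⊥ := (hbot.symm.trans hL).symm
  have h2 : s (s (a ⊓ b)) = b := by
    rw [s_inf, hsa, s_bot, top_inf_eq, hssb]
  rw [hab, s_bot, s_top] at h2
  exact absurd h2.symm (ne_of_gt hb0)
end

section
/- Every Almost Gautama algebra satisfies the identity (x ∧ x'*) ∨ (x ∧ x'*)* = 1. -/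
open StoneAlgebra AGAlgebra

/-- Every Almost Gautama algebra satisfies `(x ⊓ x'*) ⊔ (x ⊓ x'*)* = ⊤`. -/
theorem stmt_7 {α : Type*} [AGAlgebra α] :
    ∀ x : α, (x ⊓ s (p x)) ⊔ s (x ⊓ s (p x)) = ⊤ := by
  intro x
  conv_lhs => rw [← L1 x]
  exact stone (p (x ⊓ s (p x)))
end

section
/- Every Almost Gautama algebra satisfies the identity x ∨ (x ∧ x'*)* = 1. -/
open StoneAlgebra AGAlgebra

lemma s_anti {α : Type*} [StoneAlgebra α] {a b : α} (h : a ≤ b) : s b ≤ s a := by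
  have hs : s (a ⊔ b) = s a ⊓ s b := s_sup a b
  rw [sup_eq_right.mpr h] at hs
  rw [hs]; exact inf_le_left

lemma sss {α : Type*} [StoneAlgebra α] (x : α) : s (s (s x)) = s x :=
  le_antisymm (s_anti (le_ss x)) (le_ss (s x))

/-- Every Almost Gautama algebra satisfies `x ⊔ (x ⊓ x'*)* = ⊤`. -/
theorem stmt_8 {α : Type*} [AGAlgebra α] :
    ∀ x : α, x ⊔ s (x ⊓ s (p x)) = ⊤ := by
  intro x
  set t := x ⊓ s (p x) with ht
  have h1 : s (p t) = t := L1 x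
  have h2 : s (s t) = t := by
    conv_lhs => rw [← h1, sss, h1]
  have h3 : s t ⊔ s (s t) = ⊤ := stone t
  rw [h2] at h3
  refine eq_top_iff.mpr ?_
  calc (⊤ : α) = s t ⊔ t := h3.symm
    _ ≤ x ⊔ s t := sup_le le_sup_right (le_sup_left.trans' inf_le_left)
end

section
/- Let A be an Almost Gautama algebra containing an element a with a* = 0 and a' = 1. Then for all x ∈ A, x' ∨ x'* = 1. -/
open StoneAlgebra AGAlgebra

/-- In an Almost Gautama algebra containing `a` with `a* = ⊥` and `a' = ⊤`,
the identity `x' ⊔ x'* = ⊤` holds. -/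
theorem stmt_9 {α : Type*} [AGAlgebra α]
    (a : α) (ha : s a = ⊥) (ha' : p a = ⊤) :
    ∀ x : α, p x ⊔ s (p x) = ⊤ := by
  intro x
  have hmono : ∀ u v : α, u ≤ v → p v ≤ p u := by
    intro u v huv
    have h : p (u ⊓ v) = p u ⊔ p v := p_inf u v
    rw [inf_eq_left.mpr huv] at h
    calc p v ≤ p u ⊔ p v := le_sup_right
      _ = p u := h.symm
  have h1 : x ⊓ p (s (p x)) ≤ a := by
    have h := R1 x a
    rwa [ha, sup_bot_eq] at h
  have h2 : p a ≤ p (x ⊓ p (s (p x))) := hmono _ _ h1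
  rw [ha', p_inf, weak_star] at h2
  exact top_le_iff.mp h2
end

section
/- Let A be an Almost Gautama algebra containing an element a with a* = 0 and a' = 1. Then for all x ∈ A, x'** = x'. -/
open StoneAlgebra AGAlgebra

/-- In an Almost Gautama algebra containing `a` with `a* = ⊥` and `a' = ⊤`,
the identity `x'** = x'` holds. -/
theorem stmt_10 {α : Type*} [AGAlgebra α]
    (a : α) (ha : s a = ⊥) (ha' : p a = ⊤) :
    ∀ x : α, s (s (p x)) = p x := by
  have p_anti : ∀ {x y : α}, x ≤ y → p y ≤ p x := by
    intro x y h
    have h1 : p (x ⊓ y) = p x ⊔ p y := p_inf x y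
    rw [inf_eq_left.mpr h] at h1
    exact h1 ▸ le_sup_right
  have star : ∀ x : α, p x ⊔ s (p x) = ⊤ := by
    intro x
    have h1 : x ⊓ p (s (p x)) ≤ a := by
      have := R1 x a
      rwa [ha, sup_bot_eq] at this
    have h2 : p a ≤ p (x ⊓ p (s (p x))) := p_anti h1
    rw [ha', p_inf, weak_star] at h2
    exact top_le_iff.mp h2
  intro x
  have h3 : s (s (p x)) ⊓ (p x ⊔ s (p x))
      = (s (s (p x)) ⊓ p x) ⊔ (s (s (p x)) ⊓ s (p x)) := inf_sup_left _ _ _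
  rw [star x, inf_top_eq, inf_comm (s (s (p x))) (s (p x)), inf_s, sup_bot_eq,
    inf_eq_right.mpr (le_ss (p x))] at h3
  exact h3
end

section
/- There is no Almost Gautama algebra A containing elements a, b with 0 < a < 1, a* = 0, a' = 1, 0 < b < 1, b ∨ b* = 1, b' = b, and b*' = b*. Consequently the diagram ⟨2; 3_dblst, 4_dmba⟩ is not amalgamable, and the variety of Almost Gautama algebras does not have the Amalgamation Property. -/
open StoneAlgebra AGAlgebra

lemma p_antitone {α : Type*} [AGAlgebra α] {x y : α} (h : x ≤ y) : p y ≤ p x := by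
  have h1 : x ⊓ y = x := inf_eq_left.mpr h
  have := p_inf x y
  rw [h1] at this
  exact le_sup_right.trans this.ge

/-- There is no Almost Gautama algebra containing elements `a, b` with
`⊥ < a < ⊤`, `a* = ⊥`, `a' = ⊤`, `⊥ < b < ⊤`, `b ⊔ b* = ⊤`, `b' = b` and
`b*' = b*`; hence `𝔸𝔾` does not have the Amalgamation Property. -/
theorem stmt_12 {α : Type*} [AGAlgebra α] (a b : α) :
    ¬ (⊥ < a ∧ a < ⊤ ∧ s a = ⊥ ∧ p a = ⊤ ∧
       ⊥ < b ∧ b < ⊤ ∧ b ⊔ s b = ⊤ ∧ p b = b ∧ p (s b) = s b) := by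
  rintro ⟨ha0, ha1, hsa, hpa, hb0, hb1, hbsb, hpb, hpsb⟩
  -- basic facts
  have hbs : b ⊓ s b = ⊥ := inf_s b
  -- s (s b) = b
  have hssb : s (s b) = b := by
    have h1 : b ≤ s (s b) := le_ss b
    have h2 : s (s b) ≤ b := by
      have hd : s (s b) ⊓ (b ⊔ s b) = (s (s b) ⊓ b) ⊔ (s (s b) ⊓ s b) := inf_sup_left _ _ _
      have h3 : s b ⊓ s (s b) = ⊥ := inf_s (s b)
      rw [hbsb, inf_top_eq, show s (s b) ⊓ s b = ⊥ from (inf_comm _ _).trans h3,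
        sup_bot_eq] at hd
      exact hd.le.trans inf_le_right
    exact le_antisymm h2 h1
  -- pp a = ⊥
  have hppa : p (p a) = ⊥ := by rw [hpa, p_top]
  -- p (a ⊔ b) = b
  have hpab : p (a ⊔ b) = b := by
    have hle : p (a ⊔ b) ≤ b := by
      have := p_antitone (le_sup_right : b ≤ a ⊔ b); rwa [hpb] at this
    have hge : b ≤ p (a ⊔ b) := by
      have := pp_le (p (a ⊔ b))
      rw [show p (p (a ⊔ b)) = b by rw [pp_sup, hppa, bot_sup_eq, hpb, hpb]] at this
      rwa [hpb] at this
    exact le_antisymm hle hge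
  -- p (a ⊔ s b) = s b
  have hpasb : p (a ⊔ s b) = s b := by
    have hle : p (a ⊔ s b) ≤ s b := by
      have := p_antitone (le_sup_right : s b ≤ a ⊔ s b); rwa [hpsb] at this
    have hge : s b ≤ p (a ⊔ s b) := by
      have := pp_le (p (a ⊔ s b))
      rw [show p (p (a ⊔ s b)) = s b by
        rw [pp_sup, hppa, bot_sup_eq, weak_star]] at this
      rwa [hpsb] at this
    exact le_antisymm hle hge
  -- L1 at a ⊔ b gives a ⊓ s b = ⊥
  have h1 : a ⊓ s b = ⊥ := by
    have hL := L1 (a ⊔ b)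
    rw [hpab] at hL
    have hx : (a ⊔ b) ⊓ s b = a ⊓ s b := by
      rw [inf_sup_right, hbs, sup_bot_eq]
    rw [hx, p_inf, hpa, hpsb, top_sup_eq, s_top] at hL
    exact hL.symm
  -- L1 at a ⊔ s b gives a ⊓ b = ⊥
  have h2 : a ⊓ b = ⊥ := by
    have hL := L1 (a ⊔ s b)
    rw [hpasb, hssb] at hL
    have hx : (a ⊔ s b) ⊓ b = a ⊓ b := by
      rw [inf_sup_right, show s b ⊓ b = ⊥ from (inf_comm _ _).trans hbs, sup_bot_eq]
    rw [hx, p_inf, hpa, hpb, top_sup_eq, s_top] at hL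
    exact hL.symm
  -- conclude a = ⊥
  have : a = ⊥ := by
    have := calc a = a ⊓ (b ⊔ s b) := by rw [hbsb, inf_top_eq]
      _ = (a ⊓ b) ⊔ (a ⊓ s b) := inf_sup_left _ _ _
      _ = ⊥ := by rw [h1, h2, sup_bot_eq]
    exact this
  exact absurd this ha0.ne'
end

section
/- There is no Gautama algebra A containing elements a, b with 0 < a < 1, a' = 1, a* = 0, 0 < b < 1, b' = b, and b* = 0. Consequently the diagram ⟨2, 3_dblst, 3_klst⟩ is not amalgamable in the variety of Gautama algebras, which therefore fails the Amalgamation Property. -/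
/-- A Gautama algebra: a Stone algebra with a dually quasi-De Morgan
operation `p`, satisfying regularity (R1) and the star-regular identity. -/
class GAlgebra (α : Type*) extends StoneAlgebra α where
  p : α → α
  p_bot : p ⊥ = ⊤
  p_top : p ⊤ = ⊥
  p_inf : ∀ x y : α, p (x ⊓ y) = p x ⊔ p y
  pp_sup : ∀ x y : α, p (p (x ⊔ y)) = p (p x) ⊔ p (p y)
  pp_le : ∀ x : α, p (p x) ≤ x
  R1 : ∀ x y : α, x ⊓ p (s (p x)) ≤ y ⊔ s y
  star_regular : ∀ x : α, p (s x) = s (s x)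

open StoneAlgebra GAlgebra

/-- There is no Gautama algebra containing elements `a, b` with `⊥ < a < ⊤`,
`a' = ⊤`, `a* = ⊥`, `⊥ < b < ⊤`, `b' = b` and `b* = ⊥`; hence the variety of
Gautama algebras fails the Amalgamation Property. -/
theorem stmt_13 {α : Type*} [GAlgebra α] (a b : α) :
    ¬ (⊥ < a ∧ a < ⊤ ∧ p a = ⊤ ∧ s a = ⊥ ∧
       ⊥ < b ∧ b < ⊤ ∧ p b = b ∧ s b = ⊥) := by
  rintro ⟨_, hat, hpa, hsa, _, hbt, hpb, hsb⟩
  have h1 : a ≤ b := by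
    have := R1 a b
    rw [hpa, s_top, p_bot, inf_top_eq, hsb, sup_bot_eq] at this
    exact this
  have h2 : b ≤ a := by
    have := R1 b a
    rw [hpb, hsb, p_bot, inf_top_eq, hsa, sup_bot_eq] at this
    exact this
  have hab : a = b := le_antisymm h1 h2
  rw [hab, hpb] at hpa
  rw [hpa] at hbt
  exact lt_irrefl _ hbt
end

section
/- There is no algebra A in V(3_dblst, 4_dmba) containing elements a, b with 0 < a < 1, a* = 0, a' = 1, 0 < b < 1, b ∨ b* = 1, b' = b, and b*' = b*. Consequently the diagram ⟨2; 3_dblst, 4_dmba⟩ is not amalgamable, so V(3_dblst, 4_dmba) does not have the Amalgamation Property. -/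
open StoneAlgebra AGAlgebra

/-- There is no algebra in `V(3_dblst, 4_dmba)` containing elements `a, b`
with `⊥ < a < ⊤`, `a* = ⊥`, `a' = ⊤`, `⊥ < b < ⊤`, `b ⊔ b* = ⊤`, `b' = b` and
`b*' = b*`; hence this variety does not have the Amalgamation Property. -/
theorem stmt_15 {α : Type*} [AGAlgebra α]
    (hJ : ∀ x y z : α, p x ⊔ s y ⊔ z = s (p x ⊔ y) ⊔ (p x ⊔ z))
    (a b : α) :
    ¬ (⊥ < a ∧ a < ⊤ ∧ s a = ⊥ ∧ p a = ⊤ ∧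
       ⊥ < b ∧ b < ⊤ ∧ b ⊔ s b = ⊤ ∧ p b = b ∧ p (s b) = s b) := by
  rintro ⟨ha0, ha1, hsa, hpa, hb0, hb1, hbsb, hpb, hpsb⟩
  have pant : ∀ x y : α, x ≤ y → p y ≤ p x := by
    intro x y h
    have h1 : p (x ⊓ y) = p x ⊔ p y := p_inf x y
    rw [inf_eq_left.mpr h] at h1
    exact h1 ▸ le_sup_right
  -- p (a ⊔ b) = b
  have h1 : p (a ⊔ b) = b := by
    have hle : p (a ⊔ b) ≤ b := by
      have h0 := pant b (a ⊔ b) le_sup_right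
      rwa [hpb] at h0
    have hpc : p (p (a ⊔ b)) = b := by
      rw [pp_sup, hpa, p_top, hpb, hpb, bot_sup_eq]
    have hge : b ≤ p (a ⊔ b) := by
      have h2 := pp_le (p (a ⊔ b))
      rw [hpc, hpb] at h2
      exact h2
    exact le_antisymm hle hge
  -- p (a ⊔ s b) = s b
  have h2 : p (a ⊔ s b) = s b := by
    have hle : p (a ⊔ s b) ≤ s b := by
      have h0 := pant (s b) (a ⊔ s b) le_sup_right
      rwa [hpsb] at h0
    have hpc : p (p (a ⊔ s b)) = s b := by
      rw [pp_sup, hpa, p_top, weak_star, bot_sup_eq]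
    have hge : s b ≤ p (a ⊔ s b) := by
      have h3 := pp_le (p (a ⊔ s b))
      rw [hpc, hpsb] at h3
      exact h3
    exact le_antisymm hle hge
  -- a ⊓ s b = ⊥
  have h3 : a ⊓ s b = ⊥ := by
    have hL := L1 (a ⊔ b)
    rw [h1] at hL
    have hx : (a ⊔ b) ⊓ s b = a ⊓ s b := by
      rw [inf_sup_right, inf_s, sup_bot_eq]
    rw [hx, p_inf, hpa, top_sup_eq, s_top] at hL
    exact hL.symm
  -- a ⊓ s (s b) = ⊥
  have h4 : a ⊓ s (s b) = ⊥ := by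
    have hL := L1 (a ⊔ s b)
    rw [h2] at hL
    have hx : (a ⊔ s b) ⊓ s (s b) = a ⊓ s (s b) := by
      rw [inf_sup_right, inf_s, sup_bot_eq]
    rw [hx, p_inf, hpa, top_sup_eq, s_top] at hL
    exact hL.symm
  -- hence a ⊓ b = ⊥
  have h5 : a ⊓ b = ⊥ := le_bot_iff.mp (h4 ▸ inf_le_inf_left a (le_ss b))
  have h6 : a = ⊥ := by
    have : a ⊓ (b ⊔ s b) = a := by rw [hbsb, inf_top_eq]
    rw [inf_sup_left, h5, h3, sup_bot_eq] at this
    exact this.symm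
  exact absurd h6.symm (ne_of_lt ha0)
end

section
/- Let A be an Almost Gautama algebra containing an element a with a* = 0 and a' = 1. Then for all x, y ∈ A, x' ∨ y' = (x'* ∧ y'*)* and (x ∨ y)'' = (x''* ∧ y''*)*. -/
open StoneAlgebra AGAlgebra

section Aux
variable {α : Type*} [AGAlgebra α]

lemma ag_s_anti {x y : α} (h : x ≤ y) : s y ≤ s x := by
  have hs : s y = s x ⊓ s y := by rw [← s_sup, sup_eq_right.mpr h]
  rw [hs]; exact inf_le_left

lemma ag_ppp (z : α) : p (p (p z)) = p z :=
  le_antisymm (pp_le _) (ag_p_anti (pp_le z))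

lemma ag_closed {α : Type*} [AGAlgebra α]
    (a : α) (ha : s a = ⊥) (ha' : p a = ⊤) (z : α) :
    s (s (p z)) = p z := by
  set u := p z with hu
  set d := u ⊔ s u with hdd
  have h1 : a ≤ d := by
    have := R1 a u
    rwa [ha', s_top, p_bot, inf_top_eq] at this
  have hd : p (p d) = d := by
    rw [hdd, pp_sup, hu, ag_ppp, weak_star]
  have hsd : s d = ⊥ := le_bot_iff.mp (ha ▸ ag_s_anti h1)
  have h4 : p d ≤ a := by
    have := R1 (p d) a
    rwa [hd, hsd, p_bot, inf_top_eq, ha, sup_bot_eq] at this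
  have h5 : d = ⊤ := by
    have : (⊤ : α) ≤ d := by
      calc (⊤ : α) = p a := ha'.symm
        _ ≤ p (p d) := ag_p_anti h4
        _ = d := hd
    exact le_antisymm le_top this
  calc s (s u) = s (s u) ⊓ (u ⊔ s u) := by rw [← hdd, h5, inf_top_eq]
    _ = s (s u) ⊓ u ⊔ s (s u) ⊓ s u := inf_sup_left _ _ _
    _ = u ⊔ ⊥ := by rw [inf_eq_right.mpr (le_ss u), inf_comm, inf_s]
    _ = u := sup_bot_eq u

end Aux

/-- In an Almost Gautama algebra containing `a` with `a* = ⊥` and `a' = ⊤`,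
we have `x' ⊔ y' = (x'* ⊓ y'*)*` and `(x ⊔ y)'' = (x''* ⊓ y''*)*`. -/
theorem stmt_16 {α : Type*} [AGAlgebra α]
    (a : α) (ha : s a = ⊥) (ha' : p a = ⊤) :
    ∀ x y : α, p x ⊔ p y = s (s (p x) ⊓ s (p y)) ∧
      p (p (x ⊔ y)) = s (s (p (p x)) ⊓ s (p (p y))) := by
  intro x y
  constructor
  · calc p x ⊔ p y = p (x ⊓ y) := (p_inf x y).symm
      _ = s (s (p (x ⊓ y))) := (ag_closed a ha ha' _).symm
      _ = s (s (p x ⊔ p y)) := by rw [p_inf]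
      _ = s (s (p x) ⊓ s (p y)) := by rw [s_sup]
  · calc p (p (x ⊔ y)) = p (p x) ⊔ p (p y) := pp_sup x y
      _ = p (p x ⊓ p y) := (p_inf _ _).symm
      _ = s (s (p (p x ⊓ p y))) := (ag_closed a ha ha' _).symm
      _ = s (s (p (p x) ⊔ p (p y))) := by rw [p_inf]
      _ = s (s (p (p x)) ⊓ s (p (p y))) := by rw [s_sup]
end
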